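/- The second complex partial derivatives of Φ at the point (1/2, 1/4) are ∂²Φ/∂z₁² = 2πi·(2i−1)/2 = −2π − πi, ∂²Φ/∂z₂² = 2πi·(2i) = −4π, and ∂²Φ/∂z₁∂z₂ = 2πi·i = −2π; consequently the determinant of the complex Hessian of Φ at (1/2, 1/4) equals 4π²(1+i), which is nonzero, so (1/2,1/4) is a non-degenerate critical point of Φ. -/

import Mathlib

open Real

/-- The dilogarithm `Li₂(z) = -∫₀¹ log(1 - t z)/t dt` (principal branch of `log`). -/
noncomputable def Li2 (z : ℂ) : ℂ :=
  -∫ t in (0:ℝ)..1, Complex.log (1 - (t:ℂ) * z) / (t:ℂ)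

/-- The potential function of the Whitehead link (at `s₁ = s₂ = 1`). -/
noncomputable def Phi0 (z₁ z₂ : ℂ) : ℂ :=
  (1 / (2 * (π:ℂ) * Complex.I)) *
    (Li2 (Complex.exp (-(2 * (π:ℂ) * Complex.I) * (z₁ + z₂)))
     - Li2 (Complex.exp (-(2 * (π:ℂ) * Complex.I) * z₂))
     + Li2 (Complex.exp (2 * (π:ℂ) * Complex.I * z₂))
     - Li2 (Complex.exp (2 * (π:ℂ) * Complex.I * (z₁ + z₂)))
     + Li2 (Complex.exp (2 * (π:ℂ) * Complex.I * z₁)))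

/-!
Differentiating under the integral sign gives `Li₂'(z) = -log (1 - z) / z` off the cut
`[1, ∞)` (written `1 - z ∈ slitPlane`), so `d/du Li₂(eᵘ) = -log (1 - eᵘ)` and the gradient
of `Φ` is a signed sum of terms `log (1 - e^{±2πi ·})`. Differentiating once more, the Hessian
at `(1/2, 1/4)` only involves the values `e^{2πik/4} ∈ {±1, ±i}`, and the claims reduce to
arithmetic in `ℚ(i)·π`.
-/

open Complex Filter Topology Set MeasureTheory Metric

lemma one_sub_ofReal_mul_mem_slitPlane {z : ℂ} (hz : 1 - z ∈ slitPlane) {t : ℝ}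
    (ht : t ∈ Icc (0:ℝ) 1) : 1 - t * z ∈ slitPlane := by
  rw [sub_eq_add_neg] at hz
  simpa [sub_eq_add_neg] using starConvex_one_slitPlane.add_smul_mem hz ht.1 ht.2

lemma intervalIntegrable_log_one_sub_mul_div {z : ℂ} (hz : 1 - z ∈ slitPlane) :
    IntervalIntegrable (fun t : ℝ => log (1 - t * z) / t) volume 0 1 := by
  -- the integrand is the difference quotient at `0` of `g`, hence extends continuously to `t = 0`
  set g : ℝ → ℂ := fun t => log (1 - t * z)
  have hg : ∀ t ∈ Icc (0:ℝ) 1, DifferentiableAt ℝ g t := fun t ht =>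
    ((((hasDerivAt_id' t).ofReal_comp.mul_const z).const_sub 1).clog_real
      (one_sub_ofReal_mul_mem_slitPlane hz ht)).differentiableAt
  have hcont : ContinuousOn (dslope g 0) (uIcc 0 1) := by
    rw [uIcc_of_le zero_le_one]
    intro t ht
    refine ContinuousAt.continuousWithinAt ?_
    rcases eq_or_ne t 0 with rfl | ht0
    · exact continuousAt_dslope_same.2 (hg 0 ht)
    · exact (continuousAt_dslope_of_ne ht0).2 (hg t ht).continuousAt
  refine hcont.intervalIntegrable.congr fun t ht => ?_
  rw [uIoc_of_le (zero_le_one' ℝ)] at ht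
  have ht0 : t ≠ 0 := ht.1.ne'
  simp [dslope_of_ne _ ht0, slope_def_module, g, div_eq_inv_mul]

lemma integral_inv_one_sub_ofReal_mul {z : ℂ} (hz : 1 - z ∈ slitPlane) (hz0 : z ≠ 0) :
    ∫ t in (0:ℝ)..1, (1 - t * z)⁻¹ = -log (1 - z) / z := by
  have h := log_inv_eq_integral hz
  rw [log_inv _ (slitPlane_arg_ne_pi hz)] at h
  simp only [real_smul] at h
  rw [eq_div_iff hz0, h, mul_comm]

theorem hasDerivAt_Li2 {z : ℂ} (hz : 1 - z ∈ slitPlane) (hz0 : z ≠ 0) :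
    HasDerivAt Li2 (-log (1 - z) / z) z := by
  obtain ⟨ε, hε, hball⟩ := nhds_basis_closedBall.mem_iff.1
    ((isOpen_slitPlane.preimage (continuous_const.sub continuous_id)).mem_nhds hz)
  have hslit : ∀ t ∈ Icc (0:ℝ) 1, ∀ x ∈ closedBall z ε, 1 - t * x ∈ slitPlane :=
    fun t ht x hx => one_sub_ofReal_mul_mem_slitPlane (hball hx) ht
  obtain ⟨C, hC⟩ := (isCompact_Icc.prod (isCompact_closedBall z ε)).exists_bound_of_continuousOn
    (f := fun p : ℝ × ℂ => (1 - p.1 * p.2)⁻¹)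
    (ContinuousOn.inv₀ (by fun_prop) fun p hp => slitPlane_ne_zero (hslit _ hp.1 _ hp.2))
  have key := intervalIntegral.hasDerivAt_integral_of_dominated_loc_of_deriv_le (μ := volume)
    (a := 0) (b := 1) (F := fun (x : ℂ) (t : ℝ) => log (1 - t * x) / t)
    (F' := fun (x : ℂ) (t : ℝ) => -(1 - t * x)⁻¹)
    (bound := fun _ => C) (ball_mem_nhds z hε)
    (Eventually.of_forall fun x => (by fun_prop : Measurable _).aestronglyMeasurable)
    (intervalIntegrable_log_one_sub_mul_div hz) (by fun_prop) ?_ intervalIntegrable_const ?_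
  · refine key.2.neg.congr_deriv ?_
    rw [intervalIntegral.integral_neg, neg_neg, integral_inv_one_sub_ofReal_mul hz hz0]
  · refine Eventually.of_forall fun t ht x hx => ?_
    rw [uIoc_of_le zero_le_one] at ht
    simpa using hC (t, x) ⟨Ioc_subset_Icc_self ht, ball_subset_closedBall hx⟩
  · refine Eventually.of_forall fun t ht x hx => ?_
    rw [uIoc_of_le zero_le_one] at ht
    have ht0 : (t:ℂ) ≠ 0 := ofReal_ne_zero.2 ht.1.ne'
    have h1 := hslit t (Ioc_subset_Icc_self ht) x (ball_subset_closedBall hx)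
    refine ((((hasDerivAt_id' x).const_mul (t:ℂ)).const_sub 1).clog h1).div_const (t:ℂ)
      |>.congr_deriv ?_
    field_simp [slitPlane_ne_zero h1]

theorem HasDerivAt.Li2_cexp {f : ℂ → ℂ} {f' x : ℂ} (hf : HasDerivAt f f' x)
    (h : 1 - Complex.exp (f x) ∈ slitPlane) :
    HasDerivAt (fun y => Li2 (Complex.exp (f y))) (-f' * Complex.log (1 - Complex.exp (f x))) x := by
  have H := (hasDerivAt_Li2 h (Complex.exp_ne_zero (f x))).comp x hf.cexp
  refine H.congr_deriv ?_
  field_simp [Complex.exp_ne_zero]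

theorem hasDerivAt_Phi0_fst {z₁ z₂ : ℂ}
    (h₁ : 1 - exp (-(2 * π * I) * (z₁ + z₂)) ∈ slitPlane)
    (h₂ : 1 - exp (2 * π * I * (z₁ + z₂)) ∈ slitPlane)
    (h₃ : 1 - exp (2 * π * I * z₁) ∈ slitPlane) :
    HasDerivAt (fun w => Phi0 w z₂)
      (log (1 - exp (-(2 * π * I) * (z₁ + z₂))) + log (1 - exp (2 * π * I * (z₁ + z₂)))
        - log (1 - exp (2 * π * I * z₁))) z₁ := by
  have hs : HasDerivAt (fun w => w + z₂) 1 z₁ := (hasDerivAt_id' z₁).add_const z₂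
  have T₁ := HasDerivAt.Li2_cexp (hs.const_mul _) h₁
  have T₂ := HasDerivAt.Li2_cexp (hs.const_mul _) h₂
  have T₃ := HasDerivAt.Li2_cexp ((hasDerivAt_id' z₁).const_mul _) h₃
  refine ((((T₁.sub_const _).add_const _).fun_sub T₂).fun_add T₃ |>.const_mul
    (1 / (2 * π * I))).congr_deriv ?_
  field_simp [two_pi_I_ne_zero]
  ring

theorem hasDerivAt_Phi0_snd {z₁ z₂ : ℂ}
    (h₁ : 1 - exp (-(2 * π * I) * (z₁ + z₂)) ∈ slitPlane)
    (h₂ : 1 - exp (2 * π * I * (z₁ + z₂)) ∈ slitPlane)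
    (h₃ : 1 - exp (-(2 * π * I) * z₂) ∈ slitPlane)
    (h₄ : 1 - exp (2 * π * I * z₂) ∈ slitPlane) :
    HasDerivAt (fun w => Phi0 z₁ w)
      (log (1 - exp (-(2 * π * I) * (z₁ + z₂))) + log (1 - exp (2 * π * I * (z₁ + z₂)))
        - log (1 - exp (-(2 * π * I) * z₂)) - log (1 - exp (2 * π * I * z₂))) z₂ := by
  have hs : HasDerivAt (fun w => z₁ + w) 1 z₂ := (hasDerivAt_id' z₂).const_add z₁
  have T₁ := HasDerivAt.Li2_cexp (hs.const_mul _) h₁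
  have T₂ := HasDerivAt.Li2_cexp (hs.const_mul _) h₂
  have T₃ := HasDerivAt.Li2_cexp ((hasDerivAt_id' z₂).const_mul _) h₃
  have T₄ := HasDerivAt.Li2_cexp ((hasDerivAt_id' z₂).const_mul _) h₄
  refine ((((T₁.fun_sub T₃).fun_add T₄).fun_sub T₂).add_const _ |>.const_mul
    (1 / (2 * π * I))).congr_deriv ?_
  field_simp [two_pi_I_ne_zero]
  ring

lemma eventually_one_sub_cexp_mem_slitPlane {f : ℂ → ℂ} {x : ℂ} (hf : ContinuousAt f x)
    (h : 1 - exp (f x) ∈ slitPlane) : ∀ᶠ y in 𝓝 x, 1 - exp (f y) ∈ slitPlane :=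
  (continuousAt_const.sub hf.cexp).eventually_mem (isOpen_slitPlane.mem_nhds h)

lemma cexp_neg_two_pi_I_mul_three_quarters : exp (-(2 * π * I) * (1/2 + 1/4)) = I := by
  rw [show -(2 * π * I) * (1/2 + 1/4) = π / 2 * I - 2 * π * I by ring, Complex.exp_sub]
  simp

lemma cexp_two_pi_I_mul_three_quarters : exp (2 * π * I * (1/2 + 1/4)) = -I := by
  rw [show 2 * π * I * (1/2 + 1/4) = -π / 2 * I + 2 * π * I by ring, Complex.exp_add]
  simp

lemma cexp_two_pi_I_mul_half : exp (2 * π * I * (1/2)) = -1 := by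
  rw [show 2 * π * I * (1/2) = π * I by ring, exp_pi_mul_I]

lemma cexp_neg_two_pi_I_mul_quarter : exp (-(2 * π * I) * (1/4)) = -I := by
  rw [show -(2 * π * I) * (1/4) = -π / 2 * I by ring, exp_neg_pi_div_two_mul_I]

lemma cexp_two_pi_I_mul_quarter : exp (2 * π * I * (1/4)) = I := by
  rw [show 2 * π * I * (1/4) = π / 2 * I by ring, exp_pi_div_two_mul_I]

lemma one_sub_cexp_mem_slitPlane_at_half_quarter :
    1 - exp (-(2 * π * I) * (1/2 + 1/4)) ∈ slitPlane ∧ 1 - exp (2 * π * I * (1/2 + 1/4)) ∈ slitPlane ∧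
      1 - exp (2 * π * I * (1/2)) ∈ slitPlane ∧ 1 - exp (-(2 * π * I) * (1/4)) ∈ slitPlane ∧
      1 - exp (2 * π * I * (1/4)) ∈ slitPlane := by
  simp only [cexp_neg_two_pi_I_mul_three_quarters, cexp_two_pi_I_mul_three_quarters,
    cexp_two_pi_I_mul_half, cexp_neg_two_pi_I_mul_quarter, cexp_two_pi_I_mul_quarter]
  simp [mem_slitPlane_iff]

theorem Phi0_deriv_fst_fst :
    deriv (fun z => deriv (fun w => Phi0 w (1/4)) z) (1/2) =
      2 * (π:ℂ) * I * (2 * I - 1) / 2 := by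
  obtain ⟨h₁, h₂, h₃, -, -⟩ := one_sub_cexp_mem_slitPlane_at_half_quarter
  have hgrad : deriv (fun w => Phi0 w (1/4)) =ᶠ[𝓝 (1/2)] fun z =>
      log (1 - exp (-(2 * π * I) * (z + 1/4))) + log (1 - exp (2 * π * I * (z + 1/4)))
        - log (1 - exp (2 * π * I * z)) := by
    filter_upwards [eventually_one_sub_cexp_mem_slitPlane (f := fun z => -(2 * π * I) * (z + 1/4))
        (by fun_prop) h₁,
      eventually_one_sub_cexp_mem_slitPlane (f := fun z => 2 * π * I * (z + 1/4)) (by fun_prop) h₂,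
      eventually_one_sub_cexp_mem_slitPlane (f := fun z => 2 * π * I * z) (by fun_prop) h₃]
      with z hz₁ hz₂ hz₃
    exact (hasDerivAt_Phi0_fst hz₁ hz₂ hz₃).deriv
  have hs : HasDerivAt (fun w : ℂ => w + 1/4) 1 (1/2) := (hasDerivAt_id' _).add_const _
  have H := (((hs.const_mul (-(2 * π * I))).cexp.const_sub 1).clog h₁).fun_add
    (((hs.const_mul (2 * π * I)).cexp.const_sub 1).clog h₂) |>.fun_sub
    ((((hasDerivAt_id' _).const_mul (2 * π * I)).cexp.const_sub 1).clog h₃)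
  rw [hgrad.deriv_eq, H.deriv]
  simp only [cexp_neg_two_pi_I_mul_three_quarters, cexp_two_pi_I_mul_three_quarters,
    cexp_two_pi_I_mul_half, sub_neg_eq_add] at h₁ h₂ h₃ ⊢
  field_simp [slitPlane_ne_zero h₁, slitPlane_ne_zero h₂, slitPlane_ne_zero h₃]
  linear_combination (4 * I) * I_sq

theorem Phi0_deriv_snd_snd :
    deriv (fun z => deriv (fun w => Phi0 (1/2) w) z) (1/4) = 2 * (π:ℂ) * I * (2 * I) := by
  obtain ⟨h₁, h₂, -, h₃, h₄⟩ := one_sub_cexp_mem_slitPlane_at_half_quarter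
  have hgrad : deriv (fun w => Phi0 (1/2) w) =ᶠ[𝓝 (1/4)] fun z =>
      log (1 - exp (-(2 * π * I) * (1/2 + z))) + log (1 - exp (2 * π * I * (1/2 + z)))
        - log (1 - exp (-(2 * π * I) * z)) - log (1 - exp (2 * π * I * z)) := by
    filter_upwards [eventually_one_sub_cexp_mem_slitPlane (f := fun z => -(2 * π * I) * (1/2 + z))
        (by fun_prop) h₁,
      eventually_one_sub_cexp_mem_slitPlane (f := fun z => 2 * π * I * (1/2 + z)) (by fun_prop) h₂,
      eventually_one_sub_cexp_mem_slitPlane (f := fun z => -(2 * π * I) * z) (by fun_prop) h₃,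
      eventually_one_sub_cexp_mem_slitPlane (f := fun z => 2 * π * I * z) (by fun_prop) h₄]
      with z hz₁ hz₂ hz₃ hz₄
    exact (hasDerivAt_Phi0_snd hz₁ hz₂ hz₃ hz₄).deriv
  have hs : HasDerivAt (fun w : ℂ => 1/2 + w) 1 (1/4) := (hasDerivAt_id' _).const_add _
  have H := (((hs.const_mul (-(2 * π * I))).cexp.const_sub 1).clog h₁).fun_add
    (((hs.const_mul (2 * π * I)).cexp.const_sub 1).clog h₂) |>.fun_sub
    ((((hasDerivAt_id' _).const_mul (-(2 * π * I))).cexp.const_sub 1).clog h₃) |>.fun_sub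
    ((((hasDerivAt_id' _).const_mul (2 * π * I)).cexp.const_sub 1).clog h₄)
  rw [hgrad.deriv_eq, H.deriv]
  simp only [cexp_neg_two_pi_I_mul_three_quarters, cexp_two_pi_I_mul_three_quarters,
    cexp_neg_two_pi_I_mul_quarter, cexp_two_pi_I_mul_quarter, sub_neg_eq_add] at h₁ h₂ ⊢
  field_simp [slitPlane_ne_zero h₁, slitPlane_ne_zero h₂]
  linear_combination (2 : ℂ) * I_sq

theorem Phi0_deriv_fst_snd :
    deriv (fun z => deriv (fun w => Phi0 z w) (1/4)) (1/2) = 2 * (π:ℂ) * I * I := by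
  obtain ⟨h₁, h₂, -, h₃, h₄⟩ := one_sub_cexp_mem_slitPlane_at_half_quarter
  have hgrad : (fun z => deriv (fun w => Phi0 z w) (1/4)) =ᶠ[𝓝 (1/2)] fun z =>
      log (1 - exp (-(2 * π * I) * (z + 1/4))) + log (1 - exp (2 * π * I * (z + 1/4)))
        - log (1 - exp (-(2 * π * I) * (1/4))) - log (1 - exp (2 * π * I * (1/4))) := by
    filter_upwards [eventually_one_sub_cexp_mem_slitPlane (f := fun z => -(2 * π * I) * (z + 1/4))
        (by fun_prop) h₁,
      eventually_one_sub_cexp_mem_slitPlane (f := fun z => 2 * π * I * (z + 1/4)) (by fun_prop) h₂]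
      with z hz₁ hz₂
    exact (hasDerivAt_Phi0_snd hz₁ hz₂ h₃ h₄).deriv
  have hs : HasDerivAt (fun w : ℂ => w + 1/4) 1 (1/2) := (hasDerivAt_id' _).add_const _
  have H := (((hs.const_mul (-(2 * π * I))).cexp.const_sub 1).clog h₁).fun_add
    (((hs.const_mul (2 * π * I)).cexp.const_sub 1).clog h₂)
  rw [hgrad.deriv_eq, deriv_sub_const, deriv_sub_const, H.deriv]
  simp only [cexp_neg_two_pi_I_mul_three_quarters, cexp_two_pi_I_mul_three_quarters,
    sub_neg_eq_add] at h₁ h₂ ⊢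
  field_simp [slitPlane_ne_zero h₁, slitPlane_ne_zero h₂]
  linear_combination I_sq

theorem stmt_4 :
    -- ∂²Φ/∂z₁² (1/2, 1/4) = 2πi(2i-1)/2 = -2π - πi
    deriv (fun z => deriv (fun w => Phi0 w (1/4)) z) (1/2) =
      2*(π:ℂ)*Complex.I * (2*Complex.I - 1) / 2 ∧
    2*(π:ℂ)*Complex.I * (2*Complex.I - 1) / 2 = -2*(π:ℂ) - (π:ℂ)*Complex.I ∧
    -- ∂²Φ/∂z₂² (1/2, 1/4) = 2πi(2i) = -4π
    deriv (fun z => deriv (fun w => Phi0 (1/2) w) z) (1/4) =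
      2*(π:ℂ)*Complex.I * (2*Complex.I) ∧
    2*(π:ℂ)*Complex.I * (2*Complex.I) = -4*(π:ℂ) ∧
    -- ∂²Φ/∂z₁∂z₂ (1/2, 1/4) = 2πi·i = -2π
    deriv (fun z => deriv (fun w => Phi0 z w) (1/4)) (1/2) =
      2*(π:ℂ)*Complex.I * Complex.I ∧
    2*(π:ℂ)*Complex.I * Complex.I = -2*(π:ℂ) ∧
    -- the determinant of the complex Hessian equals 4π²(1+i) ≠ 0
    deriv (fun z => deriv (fun w => Phi0 w (1/4)) z) (1/2) *
        deriv (fun z => deriv (fun w => Phi0 (1/2) w) z) (1/4) -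
      (deriv (fun z => deriv (fun w => Phi0 z w) (1/4)) (1/2))^2 =
      4*(π:ℂ)^2*(1 + Complex.I) ∧
    4*(π:ℂ)^2*(1 + Complex.I) ≠ 0 := by
  refine ⟨Phi0_deriv_fst_fst, ?_, Phi0_deriv_snd_snd, ?_, Phi0_deriv_fst_snd, ?_, ?_, ?_⟩
  · linear_combination (2 * (π:ℂ)) * I_sq
  · linear_combination (4 * (π:ℂ)) * I_sq
  · linear_combination (2 * (π:ℂ)) * I_sq
  · rw [Phi0_deriv_fst_fst, Phi0_deriv_snd_snd, Phi0_deriv_fst_snd]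
    linear_combination (4 * (π:ℂ) ^ 2 * (I ^ 2 - I - 1)) * I_sq
  · have h : (1 : ℂ) + I ≠ 0 := by simp [Complex.ext_iff]
    simp [pi_ne_zero, h]
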